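/- Let 0 < s < t be integers (a vertex of type 11^0). Let M be the matrix with rows (1, 0, 0), (x, 1, 0), (y, z, 1), where x ∈ 𝒫/𝒫^{s}, y ∈ 𝒫/𝒫^{t}, and z ∈ 𝒫/𝒫^{t-s}. Then M represents a γ-fixed point at the vertex (s,t) if and only if v(x) ≥ s − m, v(z) ≥ t − s − n, and z·x·(1 − u₂/u₁) + y·(u₃/u₁ − 1) ∈ 𝒫^{t}. -/

import Mathlib

noncomputable section

/-- The element π of F = K((π)). -/
def pp (K : Type*) [Field K] : LaurentSeries K := HahnSeries.single (1 : ℤ) (1 : K)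

/-- The π-adic valuation on F = K((π)), with v(0) = ⊤. -/
def vv {K : Type*} [Field K] (x : LaurentSeries K) : WithTop ℤ := x.orderTop

/-- x ∈ 𝒫^r, i.e. v(x) ≥ r. -/
def inP {K : Type*} [Field K] (r : ℤ) (x : LaurentSeries K) : Prop := (r : WithTop ℤ) ≤ vv x

/-- x ∈ 𝒫^r/𝒫^{r'} : x is a polynomial x_r π^r + ⋯ + x_{r'-1} π^{r'-1} (possibly 0). -/
def inPQ {K : Type*} [Field K] (r r' : ℤ) (x : LaurentSeries K) : Prop :=
  inP r x ∧ ∀ i : ℤ, r' ≤ i → x.coeff i = 0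

/-- Membership in GL₃(𝒪): entries in 𝒪 and determinant a unit of 𝒪. -/
def inGLO {K : Type*} [Field K] (C : Matrix (Fin 3) (Fin 3) (LaurentSeries K)) : Prop :=
  (∀ i j, inP 0 (C i j)) ∧ vv C.det = 0

/-- The matrix x_{(s,t)} = diag(1, π^s, π^t). -/
def xst (K : Type*) [Field K] (s t : ℤ) : Matrix (Fin 3) (Fin 3) (LaurentSeries K) :=
  Matrix.diagonal ![1, pp K ^ s, pp K ^ t]

/-- Membership in the subgroup I^a of GL₃(F). -/
def inIa {K : Type*} [Field K] (a : ℤ) (g : Matrix (Fin 3) (Fin 3) (LaurentSeries K)) : Prop :=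
  g.det ≠ 0 ∧
  vv (g 0 0) = 0 ∧ vv (g 1 1) = 0 ∧ vv (g 2 2) = 0 ∧
  inP (-a) (g 0 1) ∧ inP (-a) (g 0 2) ∧ inP 0 (g 1 2) ∧
  inP (a + 1) (g 1 0) ∧ inP (a + 1) (g 2 0) ∧ inP 1 (g 2 1)

/-- Membership in x_{(s,t)}·GL₃(𝒪)·x_{(s,t)}⁻¹. -/
def inConj {K : Type*} [Field K] (s t : ℤ) (g : Matrix (Fin 3) (Fin 3) (LaurentSeries K)) : Prop :=
  ∃ C, inGLO C ∧ g = xst K s t * C * (xst K s t)⁻¹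

/-- M represents a γ-fixed point at the vertex (s,t): there is C ∈ GL₃(𝒪) with
γ·M·x_{(s,t)} = M·x_{(s,t)}·C. -/
def reprFixed {K : Type*} [Field K] (γ M : Matrix (Fin 3) (Fin 3) (LaurentSeries K))
    (s t : ℤ) : Prop :=
  ∃ C, inGLO C ∧ γ * (M * xst K s t) = M * xst K s t * C

/-! Since g = M·x_{(s,t)} is invertible, the only possible C is g⁻¹γg. This matrix is lower
triangular with diagonal u₁, u₂, u₃ and below-diagonal entries (u₂ - u₁)·x·π^{-s},
(u₃ - u₂)·z·π^{s-t} and u₁·(zx(1 - u₂/u₁) + y(u₃/u₁ - 1))·π^{-t}, so it lies in GL₃(𝒪) exactly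
when these three entries are integral. As v(u₂ - u₁) = m and v(u₃ - u₂) = n, that is the
stated condition. -/

theorem exists_mul_eq_mul_iff {n R : Type*} [Fintype n] [DecidableEq n] [CommRing R]
    {A γ C₀ : Matrix n n R} (hA : IsUnit A.det) (hC₀ : γ * A = A * C₀)
    (P : Matrix n n R → Prop) : (∃ C, P C ∧ γ * A = A * C) ↔ P C₀ := by
  refine ⟨fun ⟨C, hC, hγ⟩ => ?_, fun h => ⟨C₀, h, hC₀⟩⟩
  obtain rfl : C = C₀ := (A.isUnit_iff_isUnit_det.mpr hA).mul_left_cancel (hγ.symm.trans hC₀)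
  exact hC

section ValuedMatrices

variable {K : Type*} [Field K]

theorem vv_mul (a b : LaurentSeries K) : vv (a * b) = vv a + vv b :=
  HahnSeries.orderTop_mul a b

theorem pp_ne_zero : pp K ≠ 0 := HahnSeries.single_ne_zero one_ne_zero

theorem vv_pp_zpow (s : ℤ) : vv (pp K ^ s) = s := by
  rw [vv, pp, ← RatFunc.single_zpow]
  exact HahnSeries.orderTop_single one_ne_zero

theorem ne_zero_of_vv_eq_zero {a : LaurentSeries K} (h : vv a = 0) : a ≠ 0 := by
  rintro rfl
  simp [vv] at h

theorem inP_mul_pp_zpow_iff {c w : LaurentSeries K} {e : ℤ} (hc : vv c = e) (r : ℤ) :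
    inP 0 (c * w * pp K ^ (-r)) ↔ inP (r - e) w := by
  unfold inP
  rw [vv_mul, vv_mul, hc, vv_pp_zpow]
  induction vv w using WithTop.recTopCoe with
  | top => simp
  | coe a => norm_cast; omega

theorem vv_sub_eq_of_vv_one_sub_div {u u' : LaurentSeries K} {m : ℤ} (hu : vv u = 0)
    (h : vv (1 - u' / u) = m) : vv (u - u') = m := by
  have hu0 := ne_zero_of_vv_eq_zero hu
  rw [show u - u' = u * (1 - u' / u) by field_simp, vv_mul, hu, h, zero_add]

theorem inGLO_lowerTriangular_iff {a b c d e f : LaurentSeries K}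
    (ha : vv a = 0) (hc : vv c = 0) (hf : vv f = 0) :
    inGLO !![a, 0, 0; b, c, 0; d, e, f] ↔ inP 0 b ∧ inP 0 d ∧ inP 0 e := by
  have hdiag : ∀ {u : LaurentSeries K}, vv u = 0 → inP 0 u := fun h => h.ge
  have hzero : inP 0 (0 : LaurentSeries K) := by simp [inP, vv]
  have hdet : vv (!![a, 0, 0; b, c, 0; d, e, f]).det = 0 := by
    simp [Matrix.det_fin_three, vv_mul, ha, hc, hf]
  constructor
  · rintro ⟨h, -⟩
    exact ⟨h 1 0, h 2 0, h 2 1⟩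
  · rintro ⟨hb, hd, he⟩
    refine ⟨fun i j => ?_, hdet⟩
    fin_cases i <;> fin_cases j
    exacts [hdiag ha, hzero, hzero, hb, hdiag hc, hzero, hd, he, hdiag hf]

section FixedPoint

variable (s t : ℤ) (x y z u₁ u₂ u₃ : LaurentSeries K)

def conjMatrix : Matrix (Fin 3) (Fin 3) (LaurentSeries K) :=
  !![u₁, 0, 0;
     (u₂ - u₁) * x * pp K ^ (-s), u₂, 0;
     u₁ * (z * x * (1 - u₂ / u₁) + y * (u₃ / u₁ - 1)) * pp K ^ (-t),
       (u₃ - u₂) * z * pp K ^ (-(t - s)), u₃]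

theorem isUnit_det_lower_mul_xst : IsUnit (!![1, 0, 0; x, 1, 0; y, z, 1] * xst K s t).det := by
  rw [Matrix.det_mul, xst, Matrix.det_diagonal, Matrix.det_fin_three]
  simp [Fin.prod_univ_three, zpow_ne_zero _ pp_ne_zero]

theorem diagonal_mul_lower_mul_xst (hu₁ : u₁ ≠ 0) :
    Matrix.diagonal ![u₁, u₂, u₃] * (!![1, 0, 0; x, 1, 0; y, z, 1] * xst K s t) =
      !![1, 0, 0; x, 1, 0; y, z, 1] * xst K s t * conjMatrix s t x y z u₁ u₂ u₃ := by
  have hp : pp K ≠ 0 := pp_ne_zero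
  rw [xst, conjMatrix, Matrix.diagonal_vec3, Matrix.diagonal_vec3]
  simp only [Matrix.mul_fin_three, zpow_neg, zpow_sub₀ hp]
  ext i j : 1
  fin_cases i <;> fin_cases j <;> simp <;> field_simp <;> ring

theorem inGLO_conjMatrix_iff {m n : ℤ} (hu₁ : vv u₁ = 0) (hu₂ : vv u₂ = 0) (hu₃ : vv u₃ = 0)
    (h₁₂ : vv (u₂ - u₁) = m) (h₂₃ : vv (u₃ - u₂) = n) :
    inGLO (conjMatrix s t x y z u₁ u₂ u₃) ↔
      inP (s - m) x ∧ inP (t - s - n) z ∧ inP t (z * x * (1 - u₂ / u₁) + y * (u₃ / u₁ - 1)) := by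
  rw [conjMatrix, inGLO_lowerTriangular_iff hu₁ hu₂ hu₃, inP_mul_pp_zpow_iff h₁₂,
    inP_mul_pp_zpow_iff h₂₃, inP_mul_pp_zpow_iff hu₁, sub_zero]
  tauto

end FixedPoint

end ValuedMatrices

theorem stmt12_general (K : Type*) [Field K]
    (u₁ u₂ u₃ : LaurentSeries K) (m n : ℤ)
    (hu₁ : vv u₁ = 0) (hu₂ : vv u₂ = 0) (hu₃ : vv u₃ = 0)
    (hv₁₂ : vv (1 - u₁ / u₂) = (m : WithTop ℤ))
    (hv₂₃ : vv (1 - u₂ / u₃) = (n : WithTop ℤ))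
    (s t : ℤ)
    (x y z : LaurentSeries K) :
    reprFixed (Matrix.diagonal ![u₁, u₂, u₃]) !![1, 0, 0; x, 1, 0; y, z, 1] s t ↔
      (((s - m : ℤ) : WithTop ℤ) ≤ vv x ∧ ((t - s - n : ℤ) : WithTop ℤ) ≤ vv z ∧
        inP t (z * x * (1 - u₂ / u₁) + y * (u₃ / u₁ - 1))) :=
  (exists_mul_eq_mul_iff (isUnit_det_lower_mul_xst s t x y z)
    (diagonal_mul_lower_mul_xst s t x y z u₁ u₂ u₃ (ne_zero_of_vv_eq_zero hu₁)) inGLO).trans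
    (inGLO_conjMatrix_iff s t x y z u₁ u₂ u₃ hu₁ hu₂ hu₃
      (vv_sub_eq_of_vv_one_sub_div hu₂ hv₁₂) (vv_sub_eq_of_vv_one_sub_div hu₃ hv₂₃))

theorem stmt12 (K : Type*) [Field K]
    (u₁ u₂ u₃ : LaurentSeries K) (m n : ℤ)
    (hu₁ : vv u₁ = 0) (hu₂ : vv u₂ = 0) (hu₃ : vv u₃ = 0)
    (h₁₂ : u₁ ≠ u₂) (h₁₃ : u₁ ≠ u₃) (h₂₃ : u₂ ≠ u₃)
    (hm : 0 ≤ m) (hmn : m ≤ n)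
    (hv₁₂ : vv (1 - u₁ / u₂) = (m : WithTop ℤ))
    (hv₁₃ : vv (1 - u₁ / u₃) = (m : WithTop ℤ))
    (hv₂₃ : vv (1 - u₂ / u₃) = (n : WithTop ℤ))
    (s t : ℤ) (hs : 0 < s) (hst : s < t)
    (x y z : LaurentSeries K) (hx : inPQ 1 s x) (hy : inPQ 1 t y) (hz : inPQ 1 (t - s) z) :
    reprFixed (Matrix.diagonal ![u₁, u₂, u₃]) !![1, 0, 0; x, 1, 0; y, z, 1] s t ↔
      (((s - m : ℤ) : WithTop ℤ) ≤ vv x ∧ ((t - s - n : ℤ) : WithTop ℤ) ≤ vv z ∧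
        inP t (z * x * (1 - u₂ / u₁) + y * (u₃ / u₁ - 1))) :=
  stmt12_general K u₁ u₂ u₃ m n hu₁ hu₂ hu₃ hv₁₂ hv₂₃ s t x y z
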